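/- Klein–Gordon extra decay estimate: suppose v: R × R^2 → R is smooth and satisfies -□v + v = F, with -□ = -∂_t^2 + Δ. Then there is an absolute constant C such that for all (t,x) with t ≥ 1 and |x| ≤ 3t, |v(t,x)| ≤ C ( (|t-|x||/t) |∂∂v| + (1/t) |∂Γv| + (1/t) |∂v| + |F| )(t,x), where |∂∂v| = Σ_{α,β} |∂_α∂_β v|, |∂Γv| = Σ_{α, a} |∂_α L_a v|, and |∂v| = Σ_α |∂_α v|. -/

import Mathlib

/-!
Differentiating the boosts gives, for `a = 1, 2`,
`t ∂_a L_a v - x_a ∂_t L_a v = t² ∂_a² v - x_a² ∂_t² v + t ∂_t v - x_a ∂_a v`.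
Summing over `a` and replacing `Δv` by `F - v + ∂_t² v` expresses `t² v` as `t² F`, plus
`(t² - |x|²) ∂_t² v = (t - |x|)(t + |x|) ∂_t² v`, plus terms `t ∂v`, `x ∂v`, `t ∂Γv`, `x ∂Γv`.
In the cone `|x| ≤ 3t` every coefficient is at most `4t` (times `|t - |x||` for the second-order
term), so dividing by `t²` gives the estimate with `C = 4`.
-/

noncomputable section

/-- Partial derivative in the `i`-th coordinate on `ℝ^{1+2}` (coordinates `(t, x₁, x₂)`). -/
def pd (i : Fin 3) (u : (Fin 3 → ℝ) → ℝ) : (Fin 3 → ℝ) → ℝ :=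
  fun p => fderiv ℝ u p (Pi.single i 1)

/-- Lorentz boost `L_a u = x_a ∂_t u + t ∂_a u`. -/
def Lb (a : Fin 3) (u : (Fin 3 → ℝ) → ℝ) : (Fin 3 → ℝ) → ℝ :=
  fun p => p a * pd 0 u p + p 0 * pd a u p

lemma abs_mul_le_mul_of_abs_le {c y K Y : ℝ} (hc : |c| ≤ K) (hy : |y| ≤ Y) :
    |c * y| ≤ K * Y :=
  abs_mul c y ▸ mul_le_mul hc hy (abs_nonneg y) ((abs_nonneg c).trans hc)

section KleinGordon

variable {v F : (Fin 3 → ℝ) → ℝ}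

lemma contDiff_pd {n : WithTop ℕ∞} (hv : ContDiff ℝ (n + 1) v) (i : Fin 3) :
    ContDiff ℝ n (pd i v) :=
  (hv.fderiv_right le_rfl).clm_apply contDiff_const

lemma pd_pd_eq_fderiv_fderiv (hv : ContDiff ℝ 2 v) (i j : Fin 3) (p : Fin 3 → ℝ) :
    pd i (pd j v) p = fderiv ℝ (fderiv ℝ v) p (Pi.single i 1) (Pi.single j 1) := by
  have hd : DifferentiableAt ℝ (fderiv ℝ v) p :=
    (hv.fderiv_right (m := 1) le_rfl).differentiable one_ne_zero p
  change fderiv ℝ (fun q => fderiv ℝ v q (Pi.single j 1)) p (Pi.single i 1) = _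
  simp [fderiv_clm_apply hd (differentiableAt_const _)]

lemma pd_pd_comm (hv : ContDiff ℝ 2 v) (i j : Fin 3) (p : Fin 3 → ℝ) :
    pd i (pd j v) p = pd j (pd i v) p := by
  rw [pd_pd_eq_fderiv_fderiv hv, pd_pd_eq_fderiv_fderiv hv]
  exact hv.contDiffAt.isSymmSndFDerivAt (by simp) _ _

lemma pd_Lb (hv : ContDiff ℝ 2 v) (i a : Fin 3) (p : Fin 3 → ℝ) :
    pd i (Lb a v) p = (Pi.single i 1 : Fin 3 → ℝ) a * pd 0 v p + p a * pd i (pd 0 v) p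
      + (Pi.single i 1 : Fin 3 → ℝ) 0 * pd a v p + p 0 * pd i (pd a v) p := by
  have hd (j : Fin 3) : DifferentiableAt ℝ (pd j v) p :=
    (contDiff_pd (n := 1) hv j).differentiable one_ne_zero p
  have H : HasFDerivAt (Lb a v) _ p := ((hasFDerivAt_apply a p).mul (hd 0).hasFDerivAt).add
    ((hasFDerivAt_apply 0 p).mul (hd a).hasFDerivAt)
  change fderiv ℝ (Lb a v) p _ = _
  rw [H.fderiv]
  simp only [pd, add_apply, smul_apply, smul_eq_mul, ContinuousLinearMap.proj_apply]
  ring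

lemma pd_self_Lb (hv : ContDiff ℝ 2 v) {a : Fin 3} (ha : a ≠ 0) (p : Fin 3 → ℝ) :
    pd a (Lb a v) p = pd 0 v p + p a * pd 0 (pd a v) p + p 0 * pd a (pd a v) p := by
  rw [pd_Lb hv, pd_pd_comm hv a 0]
  simp [ha.symm]

lemma pd_zero_Lb (hv : ContDiff ℝ 2 v) {a : Fin 3} (ha : a ≠ 0) (p : Fin 3 → ℝ) :
    pd 0 (Lb a v) p = p a * pd 0 (pd 0 v) p + pd a v p + p 0 * pd 0 (pd a v) p := by
  rw [pd_Lb hv]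
  simp [ha]

lemma time_mul_pd_self_Lb_sub (hv : ContDiff ℝ 2 v) {a : Fin 3} (ha : a ≠ 0) (p : Fin 3 → ℝ) :
    p 0 * pd a (Lb a v) p - p a * pd 0 (Lb a v) p
      = p 0 ^ 2 * pd a (pd a v) p - p a ^ 2 * pd 0 (pd 0 v) p + p 0 * pd 0 v p
        - p a * pd a v p := by
  rw [pd_self_Lb hv ha, pd_zero_Lb hv ha]
  ring

lemma sq_mul_eq_of_kleinGordon {p : Fin 3 → ℝ} (hv : ContDiff ℝ 2 v)
    (hF : F p = -pd 0 (pd 0 v) p + pd 1 (pd 1 v) p + pd 2 (pd 2 v) p + v p) :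
    p 0 ^ 2 * v p = p 0 ^ 2 * F p + (p 0 ^ 2 - p 1 ^ 2 - p 2 ^ 2) * pd 0 (pd 0 v) p
      + 2 * p 0 * pd 0 v p - p 1 * pd 1 v p - p 2 * pd 2 v p
      - (p 0 * pd 1 (Lb 1 v) p - p 1 * pd 0 (Lb 1 v) p)
      - (p 0 * pd 2 (Lb 2 v) p - p 2 * pd 0 (Lb 2 v) p) := by
  rw [time_mul_pd_self_Lb_sub hv one_ne_zero,
    time_mul_pd_self_Lb_sub hv (by decide : (2 : Fin 3) ≠ 0)]
  linear_combination (-p 0 ^ 2) * hF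

lemma sq_mul_abs_le_of_kleinGordon {p : Fin 3 → ℝ} (hv : ContDiff ℝ 2 v)
    (hF : F p = -pd 0 (pd 0 v) p + pd 1 (pd 1 v) p + pd 2 (pd 2 v) p + v p)
    (ht : 0 < p 0) (hr : √(p 1 ^ 2 + p 2 ^ 2) ≤ 3 * p 0) :
    p 0 ^ 2 * |v p| ≤ p 0 * (4 * |p 0 - √(p 1 ^ 2 + p 2 ^ 2)| * |pd 0 (pd 0 v) p|
      + 3 * (|pd 1 (Lb 1 v) p| + |pd 0 (Lb 1 v) p| + |pd 2 (Lb 2 v) p| + |pd 0 (Lb 2 v) p|)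
      + 3 * (|pd 0 v p| + |pd 1 v p| + |pd 2 v p|) + p 0 * |F p|) := by
  have hid := sq_mul_eq_of_kleinGordon hv hF
  set t := p 0
  set r := √(p 1 ^ 2 + p 2 ^ 2)
  have hx₁ : |p 1| ≤ 3 * t := (Real.abs_le_sqrt (le_add_of_nonneg_right (sq_nonneg _))).trans hr
  have hx₂ : |p 2| ≤ 3 * t := (Real.abs_le_sqrt (le_add_of_nonneg_left (sq_nonneg _))).trans hr
  have ht₃ : |t| ≤ 3 * t := by rw [abs_of_pos ht]; linarith
  have hlorentz : t ^ 2 - p 1 ^ 2 - p 2 ^ 2 = (t - r) * (t + r) := by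
    linear_combination Real.sq_sqrt (add_nonneg (sq_nonneg (p 1)) (sq_nonneg (p 2)))
  have hcone : |(t - r) * (t + r)| ≤ |t - r| * (4 * t) := by
    rw [abs_mul, abs_of_nonneg (by positivity : 0 ≤ t + r)]
    gcongr
    linarith
  rw [hlorentz] at hid
  obtain ⟨hF₁, hF₂⟩ := abs_le.mp <| abs_mul_le_mul_of_abs_le (y := F p)
    (abs_of_pos (pow_pos ht 2)).le le_rfl
  obtain ⟨hA₁, hA₂⟩ := abs_le.mp <| abs_mul_le_mul_of_abs_le (y := pd 0 (pd 0 v) p) hcone le_rfl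
  obtain ⟨hD₀, hD₀'⟩ := abs_le.mp <| abs_mul_le_mul_of_abs_le (y := pd 0 v p)
    (show |2 * t| ≤ 3 * t by rw [abs_of_pos (by positivity)]; linarith) le_rfl
  obtain ⟨hD₁, hD₁'⟩ := abs_le.mp <| abs_mul_le_mul_of_abs_le (y := pd 1 v p) hx₁ le_rfl
  obtain ⟨hD₂, hD₂'⟩ := abs_le.mp <| abs_mul_le_mul_of_abs_le (y := pd 2 v p) hx₂ le_rfl
  obtain ⟨hB₁, hB₁'⟩ := abs_le.mp <| abs_mul_le_mul_of_abs_le (y := pd 1 (Lb 1 v) p) ht₃ le_rfl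
  obtain ⟨hB₂, hB₂'⟩ := abs_le.mp <| abs_mul_le_mul_of_abs_le (y := pd 2 (Lb 2 v) p) ht₃ le_rfl
  obtain ⟨hE₁, hE₁'⟩ := abs_le.mp <| abs_mul_le_mul_of_abs_le (y := pd 0 (Lb 1 v) p) hx₁ le_rfl
  obtain ⟨hE₂, hE₂'⟩ := abs_le.mp <| abs_mul_le_mul_of_abs_le (y := pd 0 (Lb 2 v) p) hx₂ le_rfl
  rw [← abs_of_pos (pow_pos ht 2), ← abs_mul, hid, abs_le]
  constructor <;> linarith

lemma abs_le_of_kleinGordon {p : Fin 3 → ℝ} (hv : ContDiff ℝ 2 v)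
    (hF : F p = -pd 0 (pd 0 v) p + pd 1 (pd 1 v) p + pd 2 (pd 2 v) p + v p)
    (ht : 0 < p 0) (hr : √(p 1 ^ 2 + p 2 ^ 2) ≤ 3 * p 0) :
    |v p| ≤ 4 * ((|p 0 - √(p 1 ^ 2 + p 2 ^ 2)| / p 0)
        * ∑ α : Fin 3, ∑ β : Fin 3, |pd α (pd β v) p|
      + (1 / p 0) * ∑ α : Fin 3, (|pd α (Lb 1 v) p| + |pd α (Lb 2 v) p|)
      + (1 / p 0) * ∑ α : Fin 3, |pd α v p| + |F p|) := by
  have key := sq_mul_abs_le_of_kleinGordon hv hF ht hr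
  set t := p 0
  set S₂ := ∑ α : Fin 3, ∑ β : Fin 3, |pd α (pd β v) p|
  set SΓ := ∑ α : Fin 3, (|pd α (Lb 1 v) p| + |pd α (Lb 2 v) p|)
  set S₁ := ∑ α : Fin 3, |pd α v p|
  have hS₂ : |pd 0 (pd 0 v) p| ≤ S₂ :=
    (Finset.single_le_sum (f := fun β => |pd 0 (pd β v) p|) (fun _ _ => abs_nonneg _)
      (Finset.mem_univ 0)).trans
    (Finset.single_le_sum (f := fun α => ∑ β : Fin 3, |pd α (pd β v) p|)
      (fun _ _ => Finset.sum_nonneg fun _ _ => abs_nonneg _) (Finset.mem_univ 0))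
  have hSΓ : |pd 1 (Lb 1 v) p| + |pd 0 (Lb 1 v) p| + |pd 2 (Lb 2 v) p| + |pd 0 (Lb 2 v) p|
      ≤ SΓ := by
    simp only [SΓ, Fin.sum_univ_three]
    linarith [abs_nonneg (pd 1 (Lb 2 v) p), abs_nonneg (pd 2 (Lb 1 v) p)]
  have hS₁ : |pd 0 v p| + |pd 1 v p| + |pd 2 v p| = S₁ :=
    (Fin.sum_univ_three (fun α => |pd α v p|)).symm
  have hA : |t - √(p 1 ^ 2 + p 2 ^ 2)| * |pd 0 (pd 0 v) p|
      ≤ |t - √(p 1 ^ 2 + p 2 ^ 2)| * S₂ := by gcongr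
  rw [show 4 * (|t - √(p 1 ^ 2 + p 2 ^ 2)| / t * S₂ + 1 / t * SΓ + 1 / t * S₁ + |F p|)
      = 4 * (|t - √(p 1 ^ 2 + p 2 ^ 2)| * S₂ + SΓ + S₁ + t * |F p|) / t by field_simp,
    le_div_iff₀ ht]
  refine le_of_mul_le_mul_left ?_ ht
  calc t * (|v p| * t) = t ^ 2 * |v p| := by ring
    _ ≤ _ := key
    _ ≤ t * (4 * (|t - √(p 1 ^ 2 + p 2 ^ 2)| * S₂ + SΓ + S₁ + t * |F p|)) := by
      have : 0 ≤ SΓ := by positivity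
      have : 0 ≤ S₁ := by positivity
      have : 0 ≤ t * |F p| := by positivity
      gcongr
      linarith

end KleinGordon

/-- Extra decay for Klein-Gordon components: if `-□v + v = F`
(with `-□ = -∂_t² + Δ`) then, in the region `{t ≥ 1, |x| ≤ 3t}`,
`|v| ≲ (|t-r|/t) |∂∂v| + (1/t) |∂Γv| + (1/t) |∂v| + |F|`. -/
theorem klein_gordon_extra_decay :
    ∃ C : ℝ, 0 < C ∧ ∀ (v F : (Fin 3 → ℝ) → ℝ), ContDiff ℝ (⊤ : ℕ∞) v →
      (∀ p, F p = -pd 0 (pd 0 v) p + pd 1 (pd 1 v) p + pd 2 (pd 2 v) p + v p) →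
      ∀ p : Fin 3 → ℝ, 1 ≤ p 0 → Real.sqrt ((p 1) ^ 2 + (p 2) ^ 2) ≤ 3 * p 0 →
        |v p| ≤ C *
          ((|p 0 - Real.sqrt ((p 1) ^ 2 + (p 2) ^ 2)| / p 0) *
              ∑ α : Fin 3, ∑ β : Fin 3, |pd α (pd β v) p|
            + (1 / p 0) * ∑ α : Fin 3, (|pd α (Lb 1 v) p| + |pd α (Lb 2 v) p|)
            + (1 / p 0) * ∑ α : Fin 3, |pd α v p|
            + |F p|) :=
  ⟨4, by norm_num, fun _ _ hv hF p ht hr =>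
    abs_le_of_kleinGordon (hv.of_le (WithTop.coe_le_coe.mpr le_top)) (hF p) (by linarith) hr⟩
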